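/- Let p1, p2, p3 be three distinct collinear points in P^2 lying on a line L, and suppose a pencil of cubics has all of p1, p2, p3 in its base locus. Then at least one cubic in the pencil contains the line L as a component, hence is reducible. -/

import Mathlib

/-!
Choose a coordinate in which `ℓ` has a nonzero coefficient and solve `ℓ = 0` for it: this
parametrizes `L` by `ℙ¹`. The restrictions of `F₁` and `F₂` to `L` are binary cubics vanishing at
the three distinct points `p₁, p₂, p₃`, so each is a scalar multiple of the product of the three
linear forms defining these points. Hence some nontrivial combination `a F₁ + b F₂` restricts to
zero on `L`; since every form is congruent modulo `ℓ` to its restriction, `ℓ` divides it.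
-/

open MvPolynomial

/-- Two nonzero vectors represent the same point of projective space. -/
def ProjEq {k : Type*} [Field k] {n : ℕ} (p q : Fin n → k) : Prop :=
  ∃ c : k, c ≠ 0 ∧ q = c • p

theorem Finset.prod_dvd_of_prime_of_pairwise_not_dvd {α ι : Type*} [CommMonoidWithZero α]
    {m : ι → α} {G : α} (hprime : ∀ i, Prime (m i)) (hdvd : ∀ i, m i ∣ G)
    (hndvd : Pairwise fun i j => ¬ m i ∣ m j) (s : Finset ι) : ∏ i ∈ s, m i ∣ G := by
  classical
  induction s using Finset.induction_on with
  | empty => simp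
  | insert a s ha ih =>
    obtain ⟨H, rfl⟩ := ih
    have hnot : ¬ m a ∣ ∏ i ∈ s, m i := by
      rw [(hprime a).dvd_finsetProd_iff]
      rintro ⟨j, hj, haj⟩
      exact hndvd (ne_of_mem_of_not_mem hj ha).symm haj
    obtain ⟨H', rfl⟩ := ((hprime a).dvd_or_dvd (hdvd a)).resolve_left hnot
    rw [Finset.prod_insert ha]
    exact ⟨H', (mul_left_comm _ _ _).trans (mul_assoc _ _ _).symm⟩

theorem exists_ne_zero_smul_add_smul_eq_zero {k V : Type*} [Field k] [AddCommGroup V] [Module k V]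
    (c₁ c₂ : k) (P : V) : ∃ a b : k, ¬(a = 0 ∧ b = 0) ∧ a • c₁ • P + b • c₂ • P = 0 := by
  by_cases hc₁ : c₁ = 0
  · exact ⟨1, 0, by simp, by simp [hc₁]⟩
  · refine ⟨c₂, -c₁, fun h => hc₁ (neg_eq_zero.mp h.2), ?_⟩
    rw [smul_smul, smul_smul, mul_comm, neg_mul, neg_smul, add_neg_cancel]

namespace MvPolynomial

theorem dvd_sub_aeval_of_forall_dvd {R σ : Type*} [CommRing R] {ℓ : MvPolynomial σ R}
    {φ : σ → MvPolynomial σ R} (h : ∀ i, ℓ ∣ X i - φ i) (F : MvPolynomial σ R) :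
    ℓ ∣ F - aeval φ F := by
  let π := Ideal.Quotient.mkₐ R (Ideal.span {ℓ})
  have hπ : π.comp (aeval φ) = π := algHom_ext fun i => by
    simpa [π, Ideal.Quotient.eq, Ideal.mem_span_singleton] using dvd_sub_comm.mp (h i)
  rw [← Ideal.mem_span_singleton, ← Ideal.Quotient.eq]
  exact (congrArg (· F) hπ).symm

theorem IsHomogeneous.aeval_algebraMap_mul {R S σ : Type*} [CommSemiring R] [CommSemiring S]
    [Algebra R S] [Fintype σ] {G : MvPolynomial σ R} {d : ℕ} (hG : G.IsHomogeneous d)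
    (x : σ → R) (a : S) :
    MvPolynomial.aeval (fun i => algebraMap R S (x i) * a) G =
      algebraMap R S (eval x G) * a ^ d := by
  rw [aeval_def, eval₂_eq, eval_eq, map_sum, Finset.sum_mul]
  refine Finset.sum_congr rfl fun v hv => ?_
  have hdeg : ∑ i ∈ v.support, v i = d := by
    rw [← hG (mem_support_iff.mp hv), Finsupp.weight_apply, Finsupp.sum]; simp
  simp only [mul_pow, Finset.prod_mul_distrib, Finset.prod_pow_eq_pow_sum, hdeg, map_mul,
    map_prod, map_pow]
  ring

variable {k : Type*} [Field k] {m n : ℕ}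

noncomputable def linearForm (c : Fin m → k) : MvPolynomial (Fin m) k := ∑ j, C (c j) * X j

theorem eval_linearForm (c z : Fin m → k) : eval z (linearForm c) = ∑ j, c j * z j := by
  simp [linearForm]

theorem isHomogeneous_linearForm (c : Fin m → k) : (linearForm c).IsHomogeneous 1 :=
  IsHomogeneous.sum _ _ _ fun j _ => isHomogeneous_C_mul_X (c j) j

theorem IsHomogeneous.exists_eq_linearForm {ℓ : MvPolynomial (Fin m) k}
    (hℓ : ℓ.IsHomogeneous 1) : ∃ c, ℓ = linearForm c := by
  have hconst (j : Fin m) : pderiv j ℓ = C (coeff 0 (pderiv j ℓ)) :=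
    totalDegree_eq_zero_iff_eq_C.mp ((totalDegree_zero_iff_isHomogeneous _).mpr hℓ.pderiv)
  refine ⟨fun j => coeff 0 (pderiv j ℓ), ?_⟩
  have := hℓ.sum_X_mul_pderiv
  rw [one_smul] at this
  conv_lhs => rw [← this]
  exact Finset.sum_congr rfl fun j _ => by rw [mul_comm, ← hconst]

/-- Solving `linearForm c = 0` for the `i`-th coordinate parametrizes that hyperplane by the
remaining coordinates. -/
noncomputable def hyperplaneChart (c : Fin (n + 1) → k) (i : Fin (n + 1)) :
    Fin (n + 1) → MvPolynomial (Fin n) k :=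
  Fin.insertNth i (C (-(c i)⁻¹) * linearForm (Fin.removeNth i c)) X

theorem isHomogeneous_hyperplaneChart (c : Fin (n + 1) → k) (i j : Fin (n + 1)) :
    (hyperplaneChart c i j).IsHomogeneous 1 := by
  induction j using Fin.succAboveCases i with
  | x =>
    simpa [hyperplaneChart] using (isHomogeneous_linearForm (Fin.removeNth i c)).C_mul (-(c i)⁻¹)
  | p j => simpa [hyperplaneChart] using isHomogeneous_X k j

theorem linearForm_dvd_X_sub_rename_hyperplaneChart {c : Fin (n + 1) → k} {i : Fin (n + 1)}
    (hi : c i ≠ 0) (j : Fin (n + 1)) :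
    linearForm c ∣ X j - rename i.succAbove (hyperplaneChart c i j) := by
  induction j using Fin.succAboveCases i with
  | x =>
    refine ⟨C (c i)⁻¹, ?_⟩
    simp only [hyperplaneChart, Fin.insertNth_apply_same, linearForm, Fin.sum_univ_succAbove _ i,
      map_mul, map_sum, rename_C, rename_X, Fin.removeNth_apply]
    have hunit : C (c i) * C (c i)⁻¹ = (1 : MvPolynomial (Fin (n + 1)) k) := by
      rw [← C_mul, mul_inv_cancel₀ hi, C_1]
    rw [map_neg]
    linear_combination -(X i) * hunit
  | p j => simp [hyperplaneChart]

theorem linearForm_dvd_of_aeval_hyperplaneChart_eq_zero {c : Fin (n + 1) → k} {i : Fin (n + 1)}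
    (hi : c i ≠ 0) {F : MvPolynomial (Fin (n + 1)) k} (hF : aeval (hyperplaneChart c i) F = 0) :
    linearForm c ∣ F := by
  have := dvd_sub_aeval_of_forall_dvd (linearForm_dvd_X_sub_rename_hyperplaneChart hi) F
  rwa [← comp_aeval_apply, hF, map_zero, sub_zero] at this

theorem eval_hyperplaneChart {c : Fin (n + 1) → k} {i : Fin (n + 1)} (hi : c i ≠ 0)
    {z : Fin (n + 1) → k} (hz : eval z (linearForm c) = 0) :
    (fun j => eval (Fin.removeNth i z) (hyperplaneChart c i j)) = z := by
  funext j
  induction j using Fin.succAboveCases i with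
  | x =>
    rw [eval_linearForm, Fin.sum_univ_succAbove _ i] at hz
    simp only [hyperplaneChart, Fin.insertNth_apply_same, map_mul, eval_C, eval_linearForm,
      Fin.removeNth_apply]
    field_simp
    linear_combination -hz
  | p j => simp [hyperplaneChart, Fin.removeNth_apply]

theorem eval_aeval_hyperplaneChart {c : Fin (n + 1) → k} {i : Fin (n + 1)} (hi : c i ≠ 0)
    {z : Fin (n + 1) → k} (hz : eval z (linearForm c) = 0) (F : MvPolynomial (Fin (n + 1)) k) :
    eval (Fin.removeNth i z) (aeval (hyperplaneChart c i) F) = eval z F := by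
  calc eval (Fin.removeNth i z) (aeval (hyperplaneChart c i) F)
      = eval (fun j => eval (Fin.removeNth i z) (hyperplaneChart c i j)) F :=
        eval₂Hom_bind₁ _ _ _ _
    _ = eval z F := by rw [eval_hyperplaneChart hi hz]

theorem eq_of_removeNth_eq {c : Fin (n + 1) → k} {i : Fin (n + 1)} (hi : c i ≠ 0)
    {z z' : Fin (n + 1) → k} (hz : eval z (linearForm c) = 0) (hz' : eval z' (linearForm c) = 0)
    (h : Fin.removeNth i z = Fin.removeNth i z') : z = z' := by
  rw [← eval_hyperplaneChart hi hz, ← eval_hyperplaneChart hi hz', h]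

theorem removeNth_ne_zero {c : Fin (n + 1) → k} {i : Fin (n + 1)} (hi : c i ≠ 0)
    {z : Fin (n + 1) → k} (hz : eval z (linearForm c) = 0) (hz0 : z ≠ 0) :
    Fin.removeNth i z ≠ 0 := fun h =>
  hz0 (eq_of_removeNth_eq hi hz (by rw [eval_linearForm]; simp) (by rw [h]; rfl))

theorem projEq_of_projEq_removeNth {c : Fin (n + 1) → k} {i : Fin (n + 1)} (hi : c i ≠ 0)
    {z z' : Fin (n + 1) → k} (hz : eval z (linearForm c) = 0) (hz' : eval z' (linearForm c) = 0)
    (h : ProjEq (Fin.removeNth i z) (Fin.removeNth i z')) : ProjEq z z' := by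
  obtain ⟨t, ht, hzz'⟩ := h
  refine ⟨t, ht, eq_of_removeNth_eq hi hz' ?_ (by rw [hzz']; rfl)⟩
  rw [eval_linearForm] at hz ⊢
  simp only [Pi.smul_apply, smul_eq_mul, mul_left_comm _ t, ← Finset.mul_sum, hz, mul_zero]

noncomputable def vanishingForm (q : Fin 2 → k) : MvPolynomial (Fin 2) k :=
  C (q 1) * X 0 - C (q 0) * X 1

theorem eval_vanishingForm (q u : Fin 2 → k) :
    eval u (vanishingForm q) = q 1 * u 0 - q 0 * u 1 := by
  simp [vanishingForm]

theorem eval_vanishingForm_self (q : Fin 2 → k) : eval q (vanishingForm q) = 0 := by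
  rw [eval_vanishingForm]; ring

theorem isHomogeneous_vanishingForm (q : Fin 2 → k) : (vanishingForm q).IsHomogeneous 1 :=
  (isHomogeneous_C_mul_X _ _).sub (isHomogeneous_C_mul_X _ _)

theorem vanishingForm_ne_zero {q : Fin 2 → k} (hq : q ≠ 0) : vanishingForm q ≠ 0 := by
  intro h
  have h₀ := congrArg (eval ![1, 0]) h
  have h₁ := congrArg (eval ![0, 1]) h
  simp only [eval_vanishingForm, map_zero] at h₀ h₁
  apply hq
  ext i
  fin_cases i <;> simp_all

theorem prime_vanishingForm {q : Fin 2 → k} (hq : q ≠ 0) : Prime (vanishingForm q) := by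
  refine (irreducible_of_totalDegree_eq_one
    ((isHomogeneous_vanishingForm q).totalDegree (vanishingForm_ne_zero hq)) fun x hx => ?_).prime
  refine isUnit_iff_ne_zero.mpr fun hx0 => vanishingForm_ne_zero hq ?_
  ext d
  simpa [hx0] using hx d

theorem vanishingForm_dvd {G : MvPolynomial (Fin 2) k} {d : ℕ} (hG : G.IsHomogeneous d)
    {q : Fin 2 → k} (hq : q ≠ 0) (hGq : eval q G = 0) : vanishingForm q ∣ G := by
  obtain ⟨j, hj⟩ := Function.ne_iff.mp hq
  have hcross (i : Fin 2) : vanishingForm q ∣ C (q j) * X i - C (q i) * X j := by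
    fin_cases i <;> fin_cases j
    exacts [by simp, dvd_rfl, ⟨-1, by simp [vanishingForm]⟩, by simp]
  -- substituting `X i ↦ (q i / q j) X j` turns `G` into `G(q) (X j / q j) ^ d = 0`
  have key := dvd_sub_aeval_of_forall_dvd (ℓ := vanishingForm q)
    (φ := fun i => algebraMap k _ (q i) * (C (q j)⁻¹ * X j)) (fun i => ?_) G
  · rwa [hG.aeval_algebraMap_mul, hGq, map_zero, zero_mul, sub_zero] at key
  · obtain ⟨r, hr⟩ := hcross i
    refine ⟨C (q j)⁻¹ * r, ?_⟩
    have hunit : C (q j)⁻¹ * C (q j) = (1 : MvPolynomial (Fin 2) k) := by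
      rw [← C_mul, inv_mul_cancel₀ hj, C_1]
    rw [algebraMap_eq]
    linear_combination C (q j)⁻¹ * hr - X i * hunit

theorem eval_vanishingForm_ne_zero {u v : Fin 2 → k} (hu : u ≠ 0) (hv : v ≠ 0)
    (huv : ¬ ProjEq u v) : eval v (vanishingForm u) ≠ 0 := by
  rw [eval_vanishingForm]
  intro hdet
  obtain ⟨j, hj⟩ := Function.ne_iff.mp hu
  have hcross (i : Fin 2) : v i * u j = v j * u i := by
    fin_cases i <;> fin_cases j <;> simp
    exacts [by linear_combination hdet, by linear_combination -hdet]
  have hvu : v = (v j / u j) • u := by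
    ext i
    rw [Pi.smul_apply, smul_eq_mul, div_mul_eq_mul_div, eq_div_iff hj, hcross]
  refine huv ⟨v j / u j, fun h0 => hv ?_, hvu⟩
  rw [hvu, h0, zero_smul]

theorem exists_eq_smul_prod_vanishingForm {G : MvPolynomial (Fin 2) k}
    (hG : G.IsHomogeneous n) {q : Fin n → Fin 2 → k} (hq0 : ∀ i, q i ≠ 0)
    (hq : Pairwise fun i j => ¬ ProjEq (q i) (q j)) (hGq : ∀ i, eval (q i) G = 0) :
    ∃ c : k, G = c • ∏ i, vanishingForm (q i) := by
  have hndvd : Pairwise fun i j => ¬ vanishingForm (q i) ∣ vanishingForm (q j) := by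
    intro i j hij hdvd
    apply eval_vanishingForm_ne_zero (hq0 j) (hq0 i) (hq hij.symm)
    obtain ⟨r, hr⟩ := hdvd
    rw [hr, map_mul, eval_vanishingForm_self, zero_mul]
  obtain ⟨H, rfl⟩ := Finset.prod_dvd_of_prime_of_pairwise_not_dvd
    (fun i => prime_vanishingForm (hq0 i)) (fun i => vanishingForm_dvd hG (hq0 i) (hGq i)) hndvd
    Finset.univ
  set P := ∏ i, vanishingForm (q i)
  by_cases hH : H = 0
  · exact ⟨0, by simp [hH]⟩
  have hP0 : P ≠ 0 := Finset.prod_ne_zero_iff.mpr fun i _ => vanishingForm_ne_zero (hq0 i)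
  have hP : P.IsHomogeneous n := by
    simpa using IsHomogeneous.prod Finset.univ _ (fun _ => 1) fun i _ =>
      isHomogeneous_vanishingForm (q i)
  have hdeg := hG.totalDegree (mul_ne_zero hP0 hH)
  rw [totalDegree_mul_of_isDomain hP0 hH, hP.totalDegree hP0, add_eq_left] at hdeg
  refine ⟨coeff 0 H, ?_⟩
  conv_lhs => rw [totalDegree_eq_zero_iff_eq_C.mp hdeg]
  rw [smul_eq_C_mul, mul_comm]

theorem exists_ne_zero_smul_add_smul_eq_zero_of_eval_eq_zero {G₁ G₂ : MvPolynomial (Fin 2) k}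
    (hG₁ : G₁.IsHomogeneous n) (hG₂ : G₂.IsHomogeneous n) {q : Fin n → Fin 2 → k}
    (hq0 : ∀ i, q i ≠ 0) (hq : Pairwise fun i j => ¬ ProjEq (q i) (q j))
    (hG₁q : ∀ i, eval (q i) G₁ = 0) (hG₂q : ∀ i, eval (q i) G₂ = 0) :
    ∃ a b : k, ¬(a = 0 ∧ b = 0) ∧ a • G₁ + b • G₂ = 0 := by
  obtain ⟨c₁, rfl⟩ := exists_eq_smul_prod_vanishingForm hG₁ hq0 hq hG₁q
  obtain ⟨c₂, rfl⟩ := exists_eq_smul_prod_vanishingForm hG₂ hq0 hq hG₂q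
  exact exists_ne_zero_smul_add_smul_eq_zero c₁ c₂ _

end MvPolynomial

theorem pencil_through_collinear_triple_contains_line_general
    {k : Type*} [Field k]
    (ℓ F₁ F₂ : MvPolynomial (Fin 3) k)
    (hℓ : ℓ.IsHomogeneous 1) (hℓ0 : ℓ ≠ 0)
    (hF₁ : F₁.IsHomogeneous 3) (hF₂ : F₂.IsHomogeneous 3)
    (p : Fin 3 → (Fin 3 → k)) (hp0 : ∀ i, p i ≠ 0)
    (hdist : ∀ i j, i ≠ j → ¬ ProjEq (p i) (p j))
    (honL : ∀ i, eval (p i) ℓ = 0)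
    (hbase : ∀ i, eval (p i) F₁ = 0 ∧ eval (p i) F₂ = 0) :
    ∃ a b : k, ¬(a = 0 ∧ b = 0) ∧ ℓ ∣ (a • F₁ + b • F₂) := by
  obtain ⟨c, rfl⟩ := hℓ.exists_eq_linearForm
  obtain ⟨i, hi⟩ : ∃ i, c i ≠ 0 := by
    by_contra! h
    exact hℓ0 (by simp [linearForm, h])
  set ψ := hyperplaneChart c i
  have hrestrict (F : MvPolynomial (Fin 3) k) (hF : F.IsHomogeneous 3) :
      (aeval ψ F).IsHomogeneous 3 := by
    simpa using hF.aeval ψ (isHomogeneous_hyperplaneChart c i)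
  obtain ⟨a, b, hab, hzero⟩ := exists_ne_zero_smul_add_smul_eq_zero_of_eval_eq_zero
    (hrestrict F₁ hF₁) (hrestrict F₂ hF₂) (q := fun j => Fin.removeNth i (p j))
    (fun j => removeNth_ne_zero hi (honL j) (hp0 j))
    (fun j j' hjj' => (hdist j j' hjj').imp (projEq_of_projEq_removeNth hi (honL j) (honL j')))
    (fun j => by rw [eval_aeval_hyperplaneChart hi (honL j), (hbase j).1])
    (fun j => by rw [eval_aeval_hyperplaneChart hi (honL j), (hbase j).2])
  refine ⟨a, b, hab, linearForm_dvd_of_aeval_hyperplaneChart_eq_zero hi ?_⟩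
  rwa [map_add, map_smul, map_smul]

/-- If `p₁, p₂, p₃` are three distinct collinear points of `ℙ²` on a line `L`, and a pencil of
cubics (spanned by linearly independent cubic forms `F₁, F₂`) has all three points in its base
locus, then some nonzero member of the pencil contains the line `L` as a component, hence
is reducible. -/
theorem pencil_through_collinear_triple_contains_line
    {k : Type*} [Field k]
    (ℓ F₁ F₂ : MvPolynomial (Fin 3) k)
    (hℓ : ℓ.IsHomogeneous 1) (hℓ0 : ℓ ≠ 0)
    (hF₁ : F₁.IsHomogeneous 3) (hF₂ : F₂.IsHomogeneous 3)
    (hindep : LinearIndependent k ![F₁, F₂])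
    (p : Fin 3 → (Fin 3 → k)) (hp0 : ∀ i, p i ≠ 0)
    (hdist : ∀ i j, i ≠ j → ¬ ProjEq (p i) (p j))
    (honL : ∀ i, eval (p i) ℓ = 0)
    (hbase : ∀ i, eval (p i) F₁ = 0 ∧ eval (p i) F₂ = 0) :
    ∃ a b : k, ¬(a = 0 ∧ b = 0) ∧ ℓ ∣ (a • F₁ + b • F₂) :=
  pencil_through_collinear_triple_contains_line_general ℓ F₁ F₂ hℓ hℓ0 hF₁ hF₂ p hp0 hdist honL
    hbase
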